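/- Let A be a connected graph with at least 2 vertices and a fixed vertex u, and B a connected graph with a fixed vertex v, with A and B vertex-disjoint. For integers n1, n2 > 1, let G(n1, n2) be obtained from A and B by attaching a pendant path of order n1 at u and joining u to v by a path of order n2 (a u–v path with n2 vertices including u and v). Then N(G(n1−1, n2+1)) − N(G(n1, n2)) = (N(A)_u − 1)(n1 − n2 − N(B)_v). In particular, N(G(n1−1, n2+1)) > N(G(n1, n2)) if and only if N(B)_v < n1 − n2. -/

import Mathlib

open SimpleGraph

/-- Number of (nonempty) connected induced subgraphs of `G`. -/
noncomputable def numCIS {V : Type*} (G : SimpleGraph V) : ℕ :=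
  Nat.card {s : Finset V // s.Nonempty ∧ (G.induce (↑s : Set V)).Connected}

/-- Number of connected induced subgraphs of `G` containing the vertex `v`. -/
noncomputable def numCISat {V : Type*} (G : SimpleGraph V) (v : V) : ℕ :=
  Nat.card {s : Finset V // v ∈ s ∧ (G.induce (↑s : Set V)).Connected}

/-- Number of connected induced subgraphs of `G` containing both `u` and `v`. -/
noncomputable def numCISat2 {V : Type*} (G : SimpleGraph V) (u v : V) : ℕ :=
  Nat.card {s : Finset V // u ∈ s ∧ v ∈ s ∧ (G.induce (↑s : Set V)).Connected}

/-- From disjoint graphs `A`, `B` with distinguished vertices `u`, `v`: attach a pendant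
path with `a` new vertices at `u`, and connect `u` to `v` by a path with `b` new internal
vertices (for `b = 0`, `u` and `v` are joined by an edge).  Thus the pendant path has
order `a + 1` (counting `u`) and the connecting `u`–`v` path has order `b + 2`. -/
def ABjoin {VA VB : Type*} (A : SimpleGraph VA) (B : SimpleGraph VB) (u : VA) (v : VB)
    (a b : ℕ) : SimpleGraph (VA ⊕ VB ⊕ Fin a ⊕ Fin b) :=
  SimpleGraph.fromRel (fun x y =>
    (∃ p q, x = Sum.inl p ∧ y = Sum.inl q ∧ A.Adj p q) ∨
    (∃ p q, x = Sum.inr (Sum.inl p) ∧ y = Sum.inr (Sum.inl q) ∧ B.Adj p q) ∨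
    (∃ i j : Fin a, x = Sum.inr (Sum.inr (Sum.inl i)) ∧ y = Sum.inr (Sum.inr (Sum.inl j)) ∧
      (i : ℕ) + 1 = (j : ℕ)) ∨
    (∃ h : 0 < a, x = Sum.inl u ∧ y = Sum.inr (Sum.inr (Sum.inl ⟨0, h⟩))) ∨
    (∃ i j : Fin b, x = Sum.inr (Sum.inr (Sum.inr i)) ∧ y = Sum.inr (Sum.inr (Sum.inr j)) ∧
      (i : ℕ) + 1 = (j : ℕ)) ∨
    (∃ h : 0 < b, x = Sum.inl u ∧ y = Sum.inr (Sum.inr (Sum.inr ⟨0, h⟩))) ∨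
    (∃ h : 0 < b, x = Sum.inr (Sum.inr (Sum.inr ⟨b - 1, Nat.sub_lt h Nat.one_pos⟩)) ∧
      y = Sum.inr (Sum.inl v)) ∨
    (b = 0 ∧ x = Sum.inl u ∧ y = Sum.inr (Sum.inl v)))

/-!
`G(n₁, n₂)` is `ABjoin A B u v (n₁ - 1) (n₂ - 2)`, a *bridge join*: `A` with a pendant path at
`u` and `B` with a pendant path at `v`, joined by one edge from `u` to the far end of the second
path. A connected set of a bridge join lies on one side or contains both ends of the bridge, so
`N(G) = N(G₁) + N(G₂) + N(G₁)_{w₁} N(G₂)_{w₂}`. A pendant path is grown by bridge joins with a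
single vertex; along this induction one also needs the counts through the attachment vertex and
through the end of the path, and through both, so the bridge formula is proved for connected sets
containing an arbitrary prescribed finset. The difference of the two counts is then a polynomial
identity, and `N(A)_u ≥ 2` (witnessed by `{u}` and `V(A)`) gives it the sign of
`n₁ - n₂ - N(B)_v`.
-/

lemma Nat.card_subtype_or_of_forall_not {α : Type*} [Finite α] {p q : α → Prop}
    (h : ∀ a, p a → ¬ q a) :
    Nat.card {a // p a ∨ q a} = Nat.card {a // p a} + Nat.card {a // q a} := by
  classical
  rw [Nat.card_congr (subtypeOrEquiv p q fun _ hp hq a ha => h a (hp a ha) (hq a ha)),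
    Nat.card_sum]

lemma Nat.card_subtype_prod {α β : Type*} (p : α → Prop) (q : β → Prop) :
    Nat.card {c : α × β // p c.1 ∧ q c.2} = Nat.card {a // p a} * Nat.card {b // q b} := by
  rw [Nat.card_congr Equiv.subtypeProdEquivProd, Nat.card_prod]

lemma Nat.card_subtype_subset_and_eq_empty {α : Type*} [DecidableEq α] (t : Finset α) :
    Nat.card {s : Finset α // t ⊆ s ∧ s = ∅} = if t = ∅ then 1 else 0 := by
  split_ifs with ht
  · subst ht
    simp
  · have : IsEmpty {s : Finset α // t ⊆ s ∧ s = ∅} :=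
      ⟨fun ⟨s, hts, hs⟩ => ht (Finset.subset_empty.mp (hs ▸ hts))⟩
    exact Nat.card_of_isEmpty

namespace SimpleGraph

section Induce

variable {V W : Type*} {G : SimpleGraph V} {H : SimpleGraph W}

lemma Connected.finset_nonempty_of_induce {s : Finset V} (h : (G.induce (s : Set V)).Connected) :
    s.Nonempty :=
  Finset.coe_nonempty.mp (Set.nonempty_coe_sort.mp h.nonempty)

lemma connected_induce_image_iff (f : G ↪g H) (s : Set V) :
    (H.induce (f '' s)).Connected ↔ (G.induce s).Connected :=
  (Iso.connected_iff ⟨Equiv.Set.image f s f.injective, by simp⟩).symm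

lemma Reachable.induce_of_adj_or_eq {s : Set V} {t : Set W} (f : V → W)
    (hst : Set.MapsTo f s t) (hf : ∀ x ∈ s, ∀ y ∈ s, G.Adj x y → H.Adj (f x) (f y) ∨ f x = f y)
    {x y : s} (h : (G.induce s).Reachable x y) :
    (H.induce t).Reachable ⟨f x, hst x.2⟩ ⟨f y, hst y.2⟩ := by
  obtain ⟨p⟩ := h
  induction p with
  | nil => rfl
  | @cons a b c hab _ ih =>
    rcases hf a a.2 b b.2 hab with h | h
    · exact (Adj.reachable (G := H.induce t) (u := ⟨f a, hst a.2⟩) (v := ⟨f b, hst b.2⟩) h).trans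
        ih
    · rwa [show (⟨f a, hst a.2⟩ : t) = ⟨f b, hst b.2⟩ from Subtype.ext h]

end Induce

section BridgeJoin

variable {V₁ V₂ : Type*}

def bridgeJoin (G₁ : SimpleGraph V₁) (G₂ : SimpleGraph V₂) (w₁ : V₁) (w₂ : V₂) :
    SimpleGraph (V₁ ⊕ V₂) :=
  G₁.sum G₂ ⊔ edge (.inl w₁) (.inr w₂)

variable {G₁ : SimpleGraph V₁} {G₂ : SimpleGraph V₂} {w₁ : V₁} {w₂ : V₂}

@[simp] lemma bridgeJoin_adj_inl_inl {p q : V₁} :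
    (bridgeJoin G₁ G₂ w₁ w₂).Adj (.inl p) (.inl q) ↔ G₁.Adj p q := by
  simp [bridgeJoin, edge_adj]

@[simp] lemma bridgeJoin_adj_inr_inr {p q : V₂} :
    (bridgeJoin G₁ G₂ w₁ w₂).Adj (.inr p) (.inr q) ↔ G₂.Adj p q := by
  simp [bridgeJoin, edge_adj]

@[simp] lemma bridgeJoin_adj_inl_inr {p : V₁} {q : V₂} :
    (bridgeJoin G₁ G₂ w₁ w₂).Adj (.inl p) (.inr q) ↔ p = w₁ ∧ q = w₂ := by
  simp [bridgeJoin, edge_adj]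

@[simp] lemma bridgeJoin_adj_inr_inl {p : V₂} {q : V₁} :
    (bridgeJoin G₁ G₂ w₁ w₂).Adj (.inr p) (.inl q) ↔ p = w₂ ∧ q = w₁ := by
  simp [bridgeJoin, edge_adj]

def bridgeJoinInl : G₁ ↪g bridgeJoin G₁ G₂ w₁ w₂ :=
  ⟨⟨Sum.inl, Sum.inl_injective⟩, bridgeJoin_adj_inl_inl⟩

def bridgeJoinInr : G₂ ↪g bridgeJoin G₁ G₂ w₁ w₂ :=
  ⟨⟨Sum.inr, Sum.inr_injective⟩, bridgeJoin_adj_inr_inr⟩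

variable {S : Set (V₁ ⊕ V₂)}

lemma bridgeJoin_ends_mem_of_preconnected
    (hS : ((bridgeJoin G₁ G₂ w₁ w₂).induce S).Preconnected) {x : V₁} {y : V₂}
    (hx : .inl x ∈ S) (hy : .inr y ∈ S) : .inl w₁ ∈ S ∧ .inr w₂ ∈ S := by
  obtain ⟨p⟩ := hS ⟨.inl x, hx⟩ ⟨.inr y, hy⟩
  obtain ⟨d, -, hfst, hsnd⟩ := p.exists_boundary_dart {z | z.1.isLeft} rfl (by simp)
  obtain ⟨⟨⟨a | a, ha⟩, ⟨b | b, hb⟩⟩, hab⟩ := d <;> simp at hfst hsnd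
  obtain ⟨rfl, rfl⟩ := bridgeJoin_adj_inl_inr.mp hab
  exact ⟨ha, hb⟩

lemma bridgeJoin_connected_induce_disjSum_empty_iff (s : Finset V₁) :
    ((bridgeJoin G₁ G₂ w₁ w₂).induce (s.disjSum (∅ : Finset V₂) : Set (V₁ ⊕ V₂))).Connected ↔
      (G₁.induce s).Connected := by
  rw [Finset.disjSum_empty, Finset.coe_map]
  exact connected_induce_image_iff bridgeJoinInl _

lemma bridgeJoin_connected_induce_empty_disjSum_iff (s : Finset V₂) :
    ((bridgeJoin G₁ G₂ w₁ w₂).induce ((∅ : Finset V₁).disjSum s : Set (V₁ ⊕ V₂))).Connected ↔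
      (G₂.induce s).Connected := by
  rw [Finset.empty_disjSum, Finset.coe_map]
  exact connected_induce_image_iff bridgeJoinInr _

-- Collapsing the `G₂` side onto `w₁` turns walks inside `S` into walks inside its `G₁` part.
lemma bridgeJoin_connected_induce_preimage_inl
    (hS : ((bridgeJoin G₁ G₂ w₁ w₂).induce S).Connected) (hw : .inl w₁ ∈ S) :
    (G₁.induce (Sum.inl ⁻¹' S)).Connected := by
  rw [connected_iff]
  refine ⟨fun p q => ?_, ⟨⟨w₁, hw⟩⟩⟩
  have hmaps : Set.MapsTo (Sum.elim id fun _ => w₁) S (Sum.inl ⁻¹' S) := by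
    rintro (z | z) hz
    exacts [hz, hw]
  refine (hS.preconnected ⟨.inl p, p.2⟩ ⟨.inl q, q.2⟩).induce_of_adj_or_eq _ hmaps ?_
  rintro (a | a) - (b | b) - hab <;> simp at hab
  exacts [.inl hab, .inr hab.1, .inr hab.2.symm, .inr rfl]

lemma bridgeJoin_connected_induce_preimage_inr
    (hS : ((bridgeJoin G₁ G₂ w₁ w₂).induce S).Connected) (hw : .inr w₂ ∈ S) :
    (G₂.induce (Sum.inr ⁻¹' S)).Connected := by
  rw [connected_iff]
  refine ⟨fun p q => ?_, ⟨⟨w₂, hw⟩⟩⟩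
  have hmaps : Set.MapsTo (Sum.elim (fun _ => w₂) id) S (Sum.inr ⁻¹' S) := by
    rintro (z | z) hz
    exacts [hw, hz]
  refine (hS.preconnected ⟨.inr p, p.2⟩ ⟨.inr q, q.2⟩).induce_of_adj_or_eq _ hmaps ?_
  rintro (a | a) - (b | b) - hab <;> simp at hab
  exacts [.inr rfl, .inr hab.2.symm, .inr hab.1, .inl hab]

lemma bridgeJoin_connected_induce_disjSum_iff (s₁ : Finset V₁) (s₂ : Finset V₂) :
    ((bridgeJoin G₁ G₂ w₁ w₂).induce (s₁.disjSum s₂ : Set (V₁ ⊕ V₂))).Connected ↔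
      (G₁.induce s₁).Connected ∧ s₂ = ∅ ∨ s₁ = ∅ ∧ (G₂.induce s₂).Connected ∨
      (w₁ ∈ s₁ ∧ (G₁.induce s₁).Connected) ∧ (w₂ ∈ s₂ ∧ (G₂.induce s₂).Connected) := by
  constructor
  · intro h
    rcases s₂.eq_empty_or_nonempty with rfl | ⟨y, hy⟩
    · exact .inl ⟨(bridgeJoin_connected_induce_disjSum_empty_iff s₁).mp h, rfl⟩
    rcases s₁.eq_empty_or_nonempty with rfl | ⟨x, hx⟩
    · exact .inr <| .inl ⟨rfl, (bridgeJoin_connected_induce_empty_disjSum_iff s₂).mp h⟩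
    obtain ⟨hw₁, hw₂⟩ := bridgeJoin_ends_mem_of_preconnected h.preconnected
      (Finset.inl_mem_disjSum.mpr hx) (Finset.inr_mem_disjSum.mpr hy)
    have h₁ := bridgeJoin_connected_induce_preimage_inl h hw₁
    have h₂ := bridgeJoin_connected_induce_preimage_inr h hw₂
    rw [show Sum.inl ⁻¹' (s₁.disjSum s₂ : Set (V₁ ⊕ V₂)) = s₁ by ext; simp] at h₁
    rw [show Sum.inr ⁻¹' (s₁.disjSum s₂ : Set (V₁ ⊕ V₂)) = s₂ by ext; simp] at h₂
    exact .inr <| .inr ⟨⟨Finset.inl_mem_disjSum.mp hw₁, h₁⟩, Finset.inr_mem_disjSum.mp hw₂, h₂⟩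
  · rintro (⟨h, rfl⟩ | ⟨rfl, h⟩ | ⟨⟨hw₁, h₁⟩, hw₂, h₂⟩)
    · exact (bridgeJoin_connected_induce_disjSum_empty_iff s₁).mpr h
    · exact (bridgeJoin_connected_induce_empty_disjSum_iff s₂).mpr h
    · have hunion : (s₁.disjSum s₂ : Set (V₁ ⊕ V₂)) =
          ↑(s₁.disjSum (∅ : Finset V₂)) ∪ ↑((∅ : Finset V₁).disjSum s₂) := by
        ext (x | x) <;> simp
      rw [hunion]
      exact connected_induce_union
        ((bridgeJoin_connected_induce_disjSum_empty_iff s₁).mpr h₁).preconnected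
        ((bridgeJoin_connected_induce_empty_disjSum_iff s₂).mpr h₂).preconnected
        (Finset.inl_mem_disjSum.mpr hw₁) (Finset.inr_mem_disjSum.mpr hw₂) (by simp)

end BridgeJoin

section PendantPath

variable {V : Type*}

def pendantPath (G : SimpleGraph V) (w : V) (k : ℕ) : SimpleGraph (V ⊕ Fin k) where
  Adj
    | .inl p, .inl q => G.Adj p q
    | .inl p, .inr i => p = w ∧ (i : ℕ) = 0
    | .inr i, .inl q => q = w ∧ (i : ℕ) = 0
    | .inr i, .inr j => (i : ℕ) + 1 = j ∨ (j : ℕ) + 1 = i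
  symm := ⟨by
    rintro (p | i) (q | j) h
    exacts [h.symm, h, h, h.symm]⟩
  loopless := ⟨by
    rintro (p | i) h
    exacts [G.irrefl h, by simp at h]⟩

def pendantPathEnd (w : V) : (k : ℕ) → V ⊕ Fin k
  | 0 => .inl w
  | k + 1 => .inr (Fin.last k)

variable {G : SimpleGraph V} {w : V}

@[simp] lemma pendantPath_adj_inl_inl {k : ℕ} {p q : V} :
    (pendantPath G w k).Adj (.inl p) (.inl q) ↔ G.Adj p q := Iff.rfl

@[simp] lemma pendantPath_adj_inl_inr {k : ℕ} {p : V} {i : Fin k} :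
    (pendantPath G w k).Adj (.inl p) (.inr i) ↔ p = w ∧ (i : ℕ) = 0 := Iff.rfl

@[simp] lemma pendantPath_adj_inr_inl {k : ℕ} {q : V} {i : Fin k} :
    (pendantPath G w k).Adj (.inr i) (.inl q) ↔ q = w ∧ (i : ℕ) = 0 := Iff.rfl

@[simp] lemma pendantPath_adj_inr_inr {k : ℕ} {i j : Fin k} :
    (pendantPath G w k).Adj (.inr i) (.inr j) ↔ (i : ℕ) + 1 = j ∨ (j : ℕ) + 1 = i := Iff.rfl

@[simp] lemma inl_eq_pendantPathEnd_iff {k : ℕ} {p : V} :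
    Sum.inl p = pendantPathEnd w k ↔ k = 0 ∧ p = w := by
  cases k <;> simp [pendantPathEnd]

@[simp] lemma inr_eq_pendantPathEnd_iff {k : ℕ} {i : Fin k} :
    Sum.inr i = pendantPathEnd w k ↔ (i : ℕ) + 1 = k := by
  cases k
  · exact i.elim0
  · simp [pendantPathEnd, Fin.ext_iff]

def pendantPathZeroIso (G : SimpleGraph V) (w : V) : pendantPath G w 0 ≃g G :=
  ⟨Equiv.sumEmpty V (Fin 0), by rintro (p | ⟨_, ⟨⟩⟩) (q | ⟨_, ⟨⟩⟩); rfl⟩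

def pendantPathSuccIso (G : SimpleGraph V) (w : V) (k : ℕ) :
    pendantPath G w (k + 1) ≃g
      bridgeJoin (pendantPath G w k) (⊥ : SimpleGraph Unit) (pendantPathEnd w k) () where
  toFun
    | .inl p => .inl (.inl p)
    | .inr i => Fin.lastCases (.inr ()) (fun j => .inl (.inr j)) i
  invFun
    | .inl (.inl p) => .inl p
    | .inl (.inr j) => .inr j.castSucc
    | .inr () => .inr (Fin.last k)
  left_inv := by
    rintro (p | i)
    · rfl
    · induction i using Fin.lastCases <;> simp
  right_inv := by
    rintro ((p | j) | ⟨⟩) <;> simp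
  map_rel_iff' := by
    rintro (p | i) (q | j)
    · simp
    · induction j using Fin.lastCases <;> simp [and_comm]
    · induction i using Fin.lastCases <;> simp [and_comm]
    · induction i using Fin.lastCases <;> induction j using Fin.lastCases <;> simp <;> omega

@[simp] lemma pendantPathSuccIso_inl (k : ℕ) (p : V) :
    pendantPathSuccIso G w k (.inl p) = .inl (.inl p) := rfl

@[simp] lemma pendantPathSuccIso_pendantPathEnd (k : ℕ) :
    pendantPathSuccIso G w k (pendantPathEnd w (k + 1)) = .inr () := by
  show Fin.lastCases (motive := fun _ => (V ⊕ Fin k) ⊕ Unit) (.inr ()) (fun j => .inl (.inr j))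
    (Fin.last k) = _
  exact Fin.lastCases_last ..

end PendantPath

end SimpleGraph

noncomputable def numCISContaining {V : Type*} (G : SimpleGraph V) (t : Finset V) : ℕ :=
  Nat.card {s : Finset V // t ⊆ s ∧ (G.induce (s : Set V)).Connected}

section Counting

variable {V W : Type*} {G : SimpleGraph V} {H : SimpleGraph W}

lemma numCIS_eq_numCISContaining_empty (G : SimpleGraph V) : numCIS G = numCISContaining G ∅ :=
  Nat.card_congr <| Equiv.subtypeEquivRight fun s =>
    ⟨fun h => ⟨s.empty_subset, h.2⟩, fun h => ⟨h.2.finset_nonempty_of_induce, h.2⟩⟩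

lemma numCISat_eq_numCISContaining_singleton (G : SimpleGraph V) (v : V) :
    numCISat G v = numCISContaining G {v} :=
  Nat.card_congr <| Equiv.subtypeEquivRight fun s => by rw [Finset.singleton_subset_iff]

lemma numCISat2_eq_numCISContaining_pair [DecidableEq V] (G : SimpleGraph V) (u v : V) :
    numCISat2 G u v = numCISContaining G {u, v} :=
  Nat.card_congr <| Equiv.subtypeEquivRight fun s => by
    rw [Finset.insert_subset_iff, Finset.singleton_subset_iff, and_assoc]

lemma numCISContaining_congr (φ : G ≃g H) (t : Finset V) :
    numCISContaining G t = numCISContaining H (t.map φ.toEquiv.toEmbedding) := by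
  refine Nat.card_congr (Equiv.subtypeEquiv (Equiv.finsetCongr φ.toEquiv) fun s => ?_)
  rw [Equiv.finsetCongr_apply, Finset.coe_map]
  exact and_congr Finset.map_subset_map.symm (connected_induce_image_iff φ.toEmbedding _).symm

lemma numCISContaining_bot_unit (t : Finset Unit) :
    numCISContaining (⊥ : SimpleGraph Unit) t = 1 := by
  refine Nat.card_eq_one_iff_unique.mpr ⟨⟨fun s s' => Subtype.ext ?_⟩,
    ⟨⟨Finset.univ, t.subset_univ, (connected_iff _).mpr ⟨.of_subsingleton, ⟨(), by simp⟩⟩⟩⟩⟩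
  rw [s.2.2.finset_nonempty_of_induce.eq_univ, s'.2.2.finset_nonempty_of_induce.eq_univ]

lemma one_lt_numCISat [Fintype V] [Nontrivial V] (hG : G.Connected) (u : V) :
    1 < numCISat G u := by
  obtain ⟨w, hw⟩ := exists_ne u
  have hsingle : (G.induce (({u} : Finset V) : Set V)).Connected := by
    rw [Finset.coe_singleton]
    exact (connected_iff _).mpr ⟨.of_subsingleton, ⟨⟨u, rfl⟩⟩⟩
  have huniv : (G.induce ((Finset.univ : Finset V) : Set V)).Connected := by
    rw [Finset.coe_univ]
    exact (induceUnivIso G).connected_iff.mpr hG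
  refine Finite.one_lt_card_iff_nontrivial.mpr ⟨⟨⟨{u}, Finset.mem_singleton_self u, hsingle⟩,
    ⟨Finset.univ, Finset.mem_univ u, huniv⟩, fun h => hw ?_⟩⟩
  have h' : ({u} : Finset V) = Finset.univ := congrArg Subtype.val h
  exact Finset.mem_singleton.mp (h' ▸ Finset.mem_univ w)

end Counting

section BridgeJoinCount

variable {V₁ V₂ : Type*} [Finite V₁] [Finite V₂] [DecidableEq V₁] [DecidableEq V₂]
  (G₁ : SimpleGraph V₁) (G₂ : SimpleGraph V₂) (w₁ : V₁) (w₂ : V₂)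

lemma numCISContaining_bridgeJoin (t₁ : Finset V₁) (t₂ : Finset V₂) :
    numCISContaining (bridgeJoin G₁ G₂ w₁ w₂) (t₁.disjSum t₂) =
      (if t₂ = ∅ then numCISContaining G₁ t₁ else 0) +
      (if t₁ = ∅ then numCISContaining G₂ t₂ else 0) +
      numCISContaining G₁ (insert w₁ t₁) * numCISContaining G₂ (insert w₂ t₂) := by
  set C₁ : Finset V₁ → Prop := fun s => (G₁.induce (s : Set V₁)).Connected
  set C₂ : Finset V₂ → Prop := fun s => (G₂.induce (s : Set V₂)).Connected
  have hsplit : ∀ p : Finset V₁ × Finset V₂,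
      (t₁ ⊆ p.1 ∧ C₁ p.1) ∧ (t₂ ⊆ p.2 ∧ p.2 = ∅) ∨ (t₁ ⊆ p.1 ∧ p.1 = ∅) ∧ (t₂ ⊆ p.2 ∧ C₂ p.2) ∨
        (insert w₁ t₁ ⊆ p.1 ∧ C₁ p.1) ∧ (insert w₂ t₂ ⊆ p.2 ∧ C₂ p.2) ↔
      t₁.disjSum t₂ ⊆ p.1.disjSum p.2 ∧
        ((bridgeJoin G₁ G₂ w₁ w₂).induce (p.1.disjSum p.2 : Set (V₁ ⊕ V₂))).Connected := by
    rintro ⟨s₁, s₂⟩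
    simp only [bridgeJoin_connected_induce_disjSum_iff, Finset.disjSum_subset,
      Finset.toLeft_disjSum, Finset.toRight_disjSum, Finset.insert_subset_iff]
    tauto
  have hdisj₁ : ∀ p : Finset V₁ × Finset V₂, (t₁ ⊆ p.1 ∧ C₁ p.1) ∧ (t₂ ⊆ p.2 ∧ p.2 = ∅) →
      ¬ ((t₁ ⊆ p.1 ∧ p.1 = ∅) ∧ (t₂ ⊆ p.2 ∧ C₂ p.2) ∨
        (insert w₁ t₁ ⊆ p.1 ∧ C₁ p.1) ∧ (insert w₂ t₂ ⊆ p.2 ∧ C₂ p.2)) := by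
    rintro p ⟨-, -, h⟩ (⟨-, -, hc⟩ | ⟨-, hw, -⟩)
    · exact Connected.finset_nonempty_of_induce hc |>.ne_empty h
    · simp [h] at hw
  have hdisj₂ : ∀ p : Finset V₁ × Finset V₂, (t₁ ⊆ p.1 ∧ p.1 = ∅) ∧ (t₂ ⊆ p.2 ∧ C₂ p.2) →
      ¬ ((insert w₁ t₁ ⊆ p.1 ∧ C₁ p.1) ∧ (insert w₂ t₂ ⊆ p.2 ∧ C₂ p.2)) := by
    rintro p ⟨⟨-, h⟩, -⟩ ⟨⟨hw, -⟩, -⟩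
    simp [h] at hw
  unfold numCISContaining
  rw [← Nat.card_congr (Equiv.subtypeEquiv Finset.sumEquiv.symm.toEquiv hsplit),
    Nat.card_subtype_or_of_forall_not hdisj₁, Nat.card_subtype_or_of_forall_not hdisj₂,
    Nat.card_subtype_prod (fun s => t₁ ⊆ s ∧ C₁ s) (fun s => t₂ ⊆ s ∧ s = ∅),
    Nat.card_subtype_prod (fun s => t₁ ⊆ s ∧ s = ∅) (fun s => t₂ ⊆ s ∧ C₂ s),
    Nat.card_subtype_prod (fun s => insert w₁ t₁ ⊆ s ∧ C₁ s) (fun s => insert w₂ t₂ ⊆ s ∧ C₂ s),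
    Nat.card_subtype_subset_and_eq_empty, Nat.card_subtype_subset_and_eq_empty]
  split_ifs <;>
    simp only [C₁, C₂, mul_one, mul_zero, one_mul, zero_mul, add_zero, zero_add, add_assoc]

end BridgeJoinCount

section PendantPathCount

variable {V : Type*} [Finite V] {G : SimpleGraph V} {w : V}

lemma numCISat_pendantPath_pendantPathEnd (k : ℕ) :
    numCISat (pendantPath G w k) (pendantPathEnd w k) = numCISat G w + k := by
  classical
  simp only [numCISat_eq_numCISContaining_singleton]
  induction k with
  | zero =>
    rw [numCISContaining_congr (pendantPathZeroIso G w)]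
    rfl
  | succ k ih =>
    have hmap : ({pendantPathEnd w (k + 1)} : Finset _).map
        (pendantPathSuccIso G w k).toEquiv.toEmbedding = (∅ : Finset (V ⊕ Fin k)).disjSum {()} := by
      simp [Finset.empty_disjSum]
    rw [numCISContaining_congr (pendantPathSuccIso G w k), hmap, numCISContaining_bridgeJoin]
    simp [numCISContaining_bot_unit, ih]
    ring

lemma numCISat2_pendantPath_inl_pendantPathEnd (k : ℕ) :
    numCISat2 (pendantPath G w k) (.inl w) (pendantPathEnd w k) = numCISat G w := by
  classical
  rw [numCISat2_eq_numCISContaining_pair, numCISat_eq_numCISContaining_singleton]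
  induction k with
  | zero =>
    rw [numCISContaining_congr (pendantPathZeroIso G w)]
    simp [pendantPathEnd]
    rfl
  | succ k ih =>
    have hmap : ({.inl w, pendantPathEnd w (k + 1)} : Finset _).map
        (pendantPathSuccIso G w k).toEquiv.toEmbedding =
          ({.inl w} : Finset (V ⊕ Fin k)).disjSum {()} := by
      ext (x | x) <;> simp
    rw [numCISContaining_congr (pendantPathSuccIso G w k), hmap, numCISContaining_bridgeJoin,
      Finset.pair_comm]
    simp [numCISContaining_bot_unit, ih]

lemma numCISat_pendantPath_inl (k : ℕ) :
    numCISat (pendantPath G w k) (.inl w) = (k + 1) * numCISat G w := by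
  classical
  induction k with
  | zero =>
    rw [numCISat_eq_numCISContaining_singleton, numCISat_eq_numCISContaining_singleton,
      numCISContaining_congr (pendantPathZeroIso G w)]
    simp
    rfl
  | succ k ih =>
    have hmap : ({.inl w} : Finset _).map (pendantPathSuccIso G w k).toEquiv.toEmbedding =
        ({.inl w} : Finset (V ⊕ Fin k)).disjSum ∅ := by
      simp [Finset.disjSum_empty]
    have hpair := numCISat2_pendantPath_inl_pendantPathEnd (G := G) (w := w) k
    simp only [numCISat_eq_numCISContaining_singleton, numCISat2_eq_numCISContaining_pair] at *
    rw [numCISContaining_congr (pendantPathSuccIso G w k), hmap, numCISContaining_bridgeJoin,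
      Finset.pair_comm]
    simp [numCISContaining_bot_unit, ih, hpair]
    ring

lemma numCIS_pendantPath_succ (k : ℕ) :
    numCIS (pendantPath G w (k + 1)) = numCIS (pendantPath G w k) + numCISat G w + k + 1 := by
  classical
  have hmap : (∅ : Finset _).map (pendantPathSuccIso G w k).toEquiv.toEmbedding =
      (∅ : Finset (V ⊕ Fin k)).disjSum (∅ : Finset Unit) := by
    simp
  have hend := numCISat_pendantPath_pendantPathEnd (G := G) (w := w) k
  simp only [numCISat_eq_numCISContaining_singleton, numCIS_eq_numCISContaining_empty] at *
  rw [numCISContaining_congr (pendantPathSuccIso G w k), hmap, numCISContaining_bridgeJoin]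
  simp [numCISContaining_bot_unit, hend]
  ring

end PendantPathCount

-- Read from `v`, the connecting path is a pendant path at `v` whose end is adjacent to `u`.
def ABjoinIsoBridgeJoin {VA VB : Type*} (A : SimpleGraph VA) (B : SimpleGraph VB) (u : VA)
    (v : VB) (a b : ℕ) :
    ABjoin A B u v a b ≃g
      bridgeJoin (pendantPath A u a) (pendantPath B v b) (.inl u) (pendantPathEnd v b) where
  toFun
    | .inl p => .inl (.inl p)
    | .inr (.inl q) => .inr (.inl q)
    | .inr (.inr (.inl i)) => .inl (.inr i)
    | .inr (.inr (.inr j)) => .inr (.inr j.rev)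
  invFun
    | .inl (.inl p) => .inl p
    | .inl (.inr i) => .inr (.inr (.inl i))
    | .inr (.inl q) => .inr (.inl q)
    | .inr (.inr j) => .inr (.inr (.inr j.rev))
  left_inv := by rintro (p | q | i | j) <;> simp
  right_inv := by rintro ((p | i) | (q | j)) <;> simp
  map_rel_iff' := by
    rintro (p | q | i | j) (p' | q' | i' | j') <;>
      simp [ABjoin, adj_comm] <;> grind [SimpleGraph.irrefl]

lemma numCIS_ABjoin {VA VB : Type*} [Finite VA] [Finite VB] (A : SimpleGraph VA)
    (B : SimpleGraph VB) (u : VA) (v : VB) (a b : ℕ) :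
    numCIS (ABjoin A B u v a b) = numCIS (A.pendantPath u a) + numCIS (B.pendantPath v b) +
      (a + 1) * numCISat A u * (numCISat B v + b) := by
  classical
  have hbridge := numCISContaining_bridgeJoin (A.pendantPath u a) (B.pendantPath v b) (.inl u)
    (pendantPathEnd v b) ∅ ∅
  simp only [Finset.empty_disjSum, Finset.map_empty, if_true, insert_empty_eq] at hbridge
  rw [numCIS_eq_numCISContaining_empty, numCISContaining_congr (ABjoinIsoBridgeJoin A B u v a b),
    Finset.map_empty, hbridge, numCIS_eq_numCISContaining_empty, numCIS_eq_numCISContaining_empty,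
    ← numCISat_eq_numCISContaining_singleton, ← numCISat_eq_numCISContaining_singleton,
    numCISat_pendantPath_inl, numCISat_pendantPath_pendantPathEnd]

theorem numCIS_ABjoin_shift_left_general {VA VB : Type*} [Fintype VA] [Fintype VB]
    (A : SimpleGraph VA) (B : SimpleGraph VB) (hA : A.Connected)
    (hcard : 2 ≤ Fintype.card VA) (u : VA) (v : VB) (n1 n2 : ℕ)
    (h1 : 1 < n1) (h2 : 1 < n2) :
    ((numCIS (ABjoin A B u v (n1 - 2) (n2 - 1)) : ℤ) -
        numCIS (ABjoin A B u v (n1 - 1) (n2 - 2)) =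
      ((numCISat A u : ℤ) - 1) * ((n1 : ℤ) - (n2 : ℤ) - numCISat B v)) ∧
    (numCIS (ABjoin A B u v (n1 - 1) (n2 - 2)) <
        numCIS (ABjoin A B u v (n1 - 2) (n2 - 1)) ↔
      (numCISat B v : ℤ) < (n1 : ℤ) - (n2 : ℤ)) := by
  obtain ⟨c, rfl⟩ : ∃ c, n1 = c + 2 := ⟨n1 - 2, by omega⟩
  obtain ⟨d, rfl⟩ : ∃ d, n2 = d + 2 := ⟨n2 - 2, by omega⟩
  rw [show c + 2 - 2 = c by omega, show c + 2 - 1 = c + 1 by omega,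
    show d + 2 - 2 = d by omega, show d + 2 - 1 = d + 1 by omega]
  have hdiff : (numCIS (ABjoin A B u v c (d + 1)) : ℤ) - numCIS (ABjoin A B u v (c + 1) d) =
      ((numCISat A u : ℤ) - 1) * (((c + 2 : ℕ) : ℤ) - ((d + 2 : ℕ) : ℤ) - numCISat B v) := by
    rw [numCIS_ABjoin, numCIS_ABjoin, numCIS_pendantPath_succ, numCIS_pendantPath_succ]
    push_cast
    ring
  have : Nontrivial VA := Fintype.one_lt_card_iff_nontrivial.mp hcard
  have hA₁ : (0 : ℤ) < numCISat A u - 1 := by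
    have := one_lt_numCISat hA u
    omega
  refine ⟨hdiff, ?_⟩
  rw [← Int.ofNat_lt, ← sub_pos, hdiff, mul_pos_iff_of_pos_left hA₁, sub_pos]

/-- With `G(n1, n2) = ABjoin A B u v (n1 - 1) (n2 - 2)` (pendant path of order `n1` at
`u` and a `u`–`v` connecting path of order `n2`),
`N(G(n1-1, n2+1)) - N(G(n1, n2)) = (N(A)_u - 1)(n1 - n2 - N(B)_v)`; in particular
`N(G(n1-1, n2+1)) > N(G(n1, n2))` iff `N(B)_v < n1 - n2`. -/
theorem numCIS_ABjoin_shift_left {VA VB : Type*} [Fintype VA] [Fintype VB]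
    (A : SimpleGraph VA) (B : SimpleGraph VB) (hA : A.Connected) (hB : B.Connected)
    (hcard : 2 ≤ Fintype.card VA) (u : VA) (v : VB) (n1 n2 : ℕ)
    (h1 : 1 < n1) (h2 : 1 < n2) :
    ((numCIS (ABjoin A B u v (n1 - 2) (n2 - 1)) : ℤ) -
        numCIS (ABjoin A B u v (n1 - 1) (n2 - 2)) =
      ((numCISat A u : ℤ) - 1) * ((n1 : ℤ) - (n2 : ℤ) - numCISat B v)) ∧
    (numCIS (ABjoin A B u v (n1 - 1) (n2 - 2)) <
        numCIS (ABjoin A B u v (n1 - 2) (n2 - 1)) ↔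
      (numCISat B v : ℤ) < (n1 : ℤ) - (n2 : ℤ)) :=
  numCIS_ABjoin_shift_left_general A B hA hcard u v n1 n2 h1 h2
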